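/- Let r ≥ k+1 and let m' have the cascade representation m' = Σ_{j=s}^{r} C(m_j, j) with 1 ≤ s ≤ m_s < m_{s+1} < ⋯ < m_r ≤ 2k. Then Σ_{j=s}^{r} C(m_j, j−1) > m'. -/

import Mathlib

open Finset

variable {V : Type*} [Fintype V] [DecidableEq V]

/-- Out-degree of `v` in the digraph given by `D`. -/
def outDeg (D : V → V → Bool) (v : V) : ℕ :=
  (Finset.univ.filter (fun w => D v w = true)).card

/-- In-degree of `v` in the digraph given by `D`. -/
def inDeg (D : V → V → Bool) (v : V) : ℕ :=
  (Finset.univ.filter (fun w => D w v = true)).card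

/-- `D` is an orientation of the simple graph `G`: every arc of `D` is an edge of `G`,
and every edge of `G` receives exactly one of the two directions. -/
def IsOrientation (G : SimpleGraph V) (D : V → V → Bool) : Prop :=
  (∀ v w, D v w = true → G.Adj v w) ∧ ∀ v w, G.Adj v w → (D v w = true ↔ D w v = false)

/-- An Eulerian orientation: an orientation with in-degree equal to out-degree everywhere. -/
def IsEulerianOrientation (G : SimpleGraph V) (D : V → V → Bool) : Prop :=
  IsOrientation G D ∧ ∀ v, inDeg D v = outDeg D v

/-- Number of arcs of `D` going from `A` to `B`. -/
def arcs (D : V → V → Bool) (A B : Finset V) : ℕ :=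
  ((A ×ˢ B).filter (fun p => D p.1 p.2 = true)).card

/-- The digraph `D` is strongly connected on the vertex set `A`. -/
def StronglyConnectedOn (D : V → V → Bool) (A : Finset V) : Prop :=
  ∀ v ∈ A, ∀ w ∈ A,
    Relation.ReflTransGen (fun a b => a ∈ A ∧ b ∈ A ∧ D a b = true) v w

/-- The digraph `D` is strongly `k`-vertex-connected: it has at least `k+1` vertices and
deleting any set of at most `k-1` vertices leaves a strongly connected digraph. -/
def StronglyKConnected (k : ℕ) (D : V → V → Bool) : Prop :=
  k + 1 ≤ Fintype.card V ∧
    ∀ Z : Finset V, Z.card ≤ k - 1 → StronglyConnectedOn D (Finset.univ \ Z)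

/-- The `d`-dimensional hypercube graph on vertex set `Fin d → Bool`. -/
def cube (d : ℕ) : SimpleGraph (Fin d → Bool) where
  Adj v w := (Finset.univ.filter (fun i => v i ≠ w i)).card = 1
  symm := by
    constructor
    intro v w h
    show (Finset.univ.filter (fun i => w i ≠ v i)).card = 1
    have he : (Finset.univ.filter (fun i => w i ≠ v i))
        = (Finset.univ.filter (fun i => v i ≠ w i)) := by
      apply Finset.filter_congr; intro i _; simp [ne_comm]
    rw [he]; exact h
  loopless := by constructor; intro v h; simp at h

/-- Number of external neighbors of the vertex set `S` in `G`. -/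
noncomputable def extNbrCard (G : SimpleGraph V) (S : Finset V) : ℕ :=
  {w | w ∉ S ∧ ∃ v ∈ S, G.Adj v w}.ncard

/-- Harper's vertex-isoperimetric quantity `b_v(m, Q_{2k})`: the minimum number of external
neighbors over all vertex sets of size `m` in the hypercube `Q_{2k}`. -/
noncomputable def bv (k m : ℕ) : ℕ :=
  sInf {n | ∃ S : Finset (Fin (2 * k) → Bool), S.card = m ∧ extNbrCard (cube (2 * k)) S = n}

/-!
Write `chooseGap n i = C(n, i) - C(n, i+1)`; after the shift `i = j - 1` the claim is that
`∑ chooseGap (m_{i+1}) i` is positive. A term is nonnegative iff `n ≤ 2i + 1`, positive iff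
moreover `i ≤ n ≤ 2i`, and `chooseGap · i` is strictly decreasing from `2i` on.
Append after `m_r ≤ 2k ≤ 2r - 2` the virtual entry `2r - 1`, the largest `n` with
`C(n, r-1) ≥ C(n, r)`, so that the top term behaves like the others. By downward induction,
the tail sum starting at `i`, with its first entry replaced by any `n ≥ i` strictly below (resp. at most) the
next entry `M`, is positive (resp. nonnegative). When `chooseGap n i < 0`, Pascal's rule
`chooseGap (M+1) (i+1) = chooseGap M (i+1) + chooseGap M i` turns the nonnegative case for the
bumped entry `M + 1` into the bound `tail ≥ -chooseGap M i`, and `chooseGap n i > chooseGap M i`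
finishes the step.
-/

def chooseGap (n i : ℕ) : ℤ := n.choose i - n.choose (i + 1)

theorem chooseGap_succ_succ (n i : ℕ) :
    chooseGap (n + 1) (i + 1) = chooseGap n (i + 1) + chooseGap n i := by
  simp only [chooseGap, Nat.choose_succ_succ' n]
  push_cast
  ring

theorem chooseGap_nonneg {n i : ℕ} (h : n ≤ 2 * i + 1) : 0 ≤ chooseGap n i := by
  have hmul : n.choose (i + 1) * (i + 1) ≤ n.choose i * (i + 1) := by
    rw [Nat.choose_succ_right_eq]
    exact Nat.mul_le_mul_left _ (by omega)
  have := Nat.le_of_mul_le_mul_right hmul (Nat.succ_pos i)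
  rw [chooseGap, sub_nonneg]
  exact_mod_cast this

theorem chooseGap_pos {n i : ℕ} (h₁ : i ≤ n) (h₂ : n ≤ 2 * i) : 0 < chooseGap n i := by
  have hmul : n.choose (i + 1) * (i + 1) < n.choose i * (i + 1) := by
    rw [Nat.choose_succ_right_eq]
    exact Nat.mul_lt_mul_of_pos_left (by omega) (Nat.choose_pos h₁)
  have := Nat.lt_of_mul_lt_mul_right hmul
  rw [chooseGap, sub_pos]
  exact_mod_cast this

theorem chooseGap_neg {n i : ℕ} (h : 2 * i + 2 ≤ n) : chooseGap n i < 0 := by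
  have hmul : n.choose i * (i + 1) < n.choose (i + 1) * (i + 1) := by
    rw [Nat.choose_succ_right_eq]
    exact Nat.mul_lt_mul_of_pos_left (by omega) (Nat.choose_pos (by omega))
  have := Nat.lt_of_mul_lt_mul_right hmul
  rw [chooseGap, sub_neg]
  exact_mod_cast this

theorem chooseGap_succ_lt {n i : ℕ} (h : 2 * i ≤ n) : chooseGap (n + 1) i < chooseGap n i := by
  cases i with
  | zero => simp [chooseGap]
  | succ i =>
    rw [chooseGap_succ_succ]
    linarith [chooseGap_neg (n := n) (i := i) (by omega)]

theorem chooseGap_lt_of_lt {n m i : ℕ} (h : 2 * i ≤ n) (hnm : n < m) :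
    chooseGap m i < chooseGap n i := by
  induction m, hnm using Nat.le_induction with
  | base => exact chooseGap_succ_lt h
  | succ m hm ih => exact (chooseGap_succ_lt (by omega)).trans ih

section Tail

variable (a : ℕ → ℕ) (q : ℕ)

def gapTail (p n : ℕ) : ℤ := chooseGap n p + ∑ i ∈ Ioc p q, chooseGap (a i) i

variable {a q}

theorem gapTail_self (n : ℕ) : gapTail a q q n = chooseGap n q := by
  simp [gapTail]

theorem gapTail_of_lt {p : ℕ} (hp : p < q) (n : ℕ) :
    gapTail a q p n = chooseGap n p + gapTail a q (p + 1) (a (p + 1)) := by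
  rw [gapTail, gapTail, ← Icc_add_one_left_eq_Ioc,
    ← add_sum_Ioc_eq_sum_Icc (f := fun i => chooseGap (a i) i) (show p + 1 ≤ q from hp)]

theorem gapTail_succ (p n : ℕ) :
    gapTail a q (p + 1) (n + 1) = chooseGap n p + gapTail a q (p + 1) n := by
  simp only [gapTail, chooseGap_succ_succ]
  ring

theorem gapTail_pos_and_nonneg {p : ℕ} (hpq : p ≤ q)
    (hmono : ∀ i, p < i → i ≤ q → a i < a (i + 1)) (htop : a (q + 1) ≤ 2 * q + 1) :
    (∀ n, p ≤ n → n < a (p + 1) → 0 < gapTail a q p n) ∧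
      (∀ n, p ≤ n → n ≤ a (p + 1) → 0 ≤ gapTail a q p n) := by
  induction hpq using Nat.decreasingInduction with
  | self =>
    simp only [gapTail_self]
    exact ⟨fun n hqn hn => chooseGap_pos hqn (by omega),
      fun n _ hn => chooseGap_nonneg (by omega)⟩
  | of_succ p hp ih =>
    obtain ⟨ih_pos, ih_nonneg⟩ := ih fun i hi hiq => hmono i (by omega) hiq
    set M := a (p + 1)
    have hM : M < a (p + 1 + 1) := hmono (p + 1) (by omega) (by omega)
    have hbump : p ≤ M → 0 ≤ chooseGap M p + gapTail a q (p + 1) M := fun hpM => by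
      rw [← gapTail_succ]
      exact ih_nonneg (M + 1) (by omega) hM
    have hpos : ∀ n, p ≤ n → n < M → 0 < gapTail a q p n := by
      intro n hpn hnM
      rw [gapTail_of_lt hp]
      rcases le_or_gt 0 (chooseGap n p) with hn | hn
      · linarith [ih_pos M (by omega) hM]
      · have h2p : 2 * p ≤ n := by
          by_contra
          exact hn.not_ge (chooseGap_nonneg (by omega))
        linarith [chooseGap_lt_of_lt h2p hnM, hbump (by omega)]
    refine ⟨hpos, fun n hpn hnM => ?_⟩
    rcases hnM.lt_or_eq with hlt | rfl
    · exact (hpos n hpn hlt).le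
    · rw [gapTail_of_lt hp]
      exact hbump hpn

end Tail

theorem sum_chooseGap_pos {a : ℕ → ℕ} {p q : ℕ} (hpq : p ≤ q) (hp : p ≤ a p)
    (hmono : ∀ i, p ≤ i → i < q → a i < a (i + 1)) (htop : a q ≤ 2 * q) :
    0 < ∑ i ∈ Icc p q, chooseGap (a i) i := by
  set b := Function.update a (q + 1) (2 * q + 1)
  have hb : ∀ i ≤ q, b i = a i := fun i hi => Function.update_of_ne (by omega) _ _
  have hbmono : ∀ i, p ≤ i → i ≤ q → b i < b (i + 1) := by
    intro i hpi hiq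
    rcases Nat.lt_or_eq_of_le hiq with hlt | rfl
    · rw [hb i hiq, hb (i + 1) hlt]
      exact hmono i hpi hlt
    · rw [hb i le_rfl, show b (i + 1) = 2 * i + 1 from Function.update_self ..]
      omega
  have h := (gapTail_pos_and_nonneg hpq (fun i hpi hiq => hbmono i hpi.le hiq) (by simp [b])).1
    (b p) (by rwa [hb p hpq]) (hbmono p le_rfl hpq)
  rw [gapTail, add_sum_Ioc_eq_sum_Icc (f := fun i => chooseGap (b i) i) hpq] at h
  rwa [sum_congr rfl fun i hi => by rw [hb i (mem_Icc.1 hi).2]] at h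

theorem stmt9_general (k r s : ℕ) (f : ℕ → ℕ) (hs : 1 ≤ s) (hsr : s ≤ r)
    (hr : k + 1 ≤ r) (hfs : s ≤ f s)
    (hmono : ∀ j, s ≤ j → j < r → f j < f (j + 1))
    (htop : f r ≤ 2 * k) :
    ∑ j ∈ Finset.Icc s r, Nat.choose (f j) j
      < ∑ j ∈ Finset.Icc s r, Nat.choose (f j) (j - 1) := by
  obtain ⟨p, rfl⟩ : ∃ p, s = p + 1 := ⟨s - 1, by omega⟩
  obtain ⟨q, rfl⟩ : ∃ q, r = q + 1 := ⟨r - 1, by omega⟩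
  have hgap : 0 < ∑ i ∈ Icc p q, chooseGap (f (i + 1)) i :=
    sum_chooseGap_pos (by omega) (by omega)
      (fun i hpi hiq => hmono (i + 1) (by omega) (by omega)) (by omega)
  rw [← map_add_right_Icc, sum_map, sum_map]
  simp only [addRightEmbedding_apply, Nat.add_sub_cancel]
  simp only [chooseGap, sum_sub_distrib, sub_pos] at hgap
  exact_mod_cast hgap

/-- The lower-shadow inequality for the cascade representation:
if `r ≥ k+1` and `m' = Σ_{j=s}^r C(m_j, j)` with `1 ≤ s ≤ m_s < ⋯ < m_r ≤ 2k`,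
then `Σ_{j=s}^r C(m_j, j-1) > m'`. -/
theorem stmt9 (k r s : ℕ) (f : ℕ → ℕ) (hk : 1 ≤ k) (hs : 1 ≤ s) (hsr : s ≤ r)
    (hr : k + 1 ≤ r) (hfs : s ≤ f s)
    (hmono : ∀ j, s ≤ j → j < r → f j < f (j + 1))
    (htop : f r ≤ 2 * k) :
    ∑ j ∈ Finset.Icc s r, Nat.choose (f j) j
      < ∑ j ∈ Finset.Icc s r, Nat.choose (f j) (j - 1) :=
  stmt9_general k r s f hs hsr hr hfs hmono htop
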